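/- Let s be a system of cycles (disjoint oriented simple lattice cycles in Z^2) corresponding to a tiling of a duplex region, let γ be a cycle of s, and let v ∈ Z^2. Then the topological weight top(γ,v) minus the metric weight m(γ,v) equals the angle ∠(γ,v) if v lies on γ, and equals 0 otherwise. -/

import Mathlib

open scoped Classical

noncomputable section

/-- A unit step in `ℤ²`. -/
def IsUnitStep (d : ℤ × ℤ) : Prop :=
  d = (1, 0) ∨ d = (-1, 0) ∨ d = (0, 1) ∨ d = (0, -1)

/-- Signed crossing of the lattice edge from `A` to `B` with the horizontal ray going
right from `p` (half-open convention in the vertical direction). -/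
def windTerm (A B : ℤ × ℤ) (p : ℝ × ℝ) : ℤ :=
  if A.1 = B.1 ∧ p.1 < (A.1 : ℝ) ∧ ((min A.2 B.2 : ℤ) : ℝ) ≤ p.2 ∧
      p.2 < ((max A.2 B.2 : ℤ) : ℝ) then
    B.2 - A.2
  else 0

/-- The winding number of the closed lattice cycle with vertices `g 0, …, g (n-1)`
(edges from `g k` to `g (k+1)`, with `g n = g 0`) around a point `p` not on the
cycle, computed as the signed number of crossings with a horizontal ray. -/
def wind (n : ℕ) (g : ℕ → ℤ × ℤ) (p : ℝ × ℝ) : ℤ :=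
  ∑ k ∈ Finset.range n, windTerm (g k) (g (k + 1)) p

/-- The four points `v + (±1/2, ±1/2)` surrounding `v ∈ ℤ²`. -/
def dpt (v : ℤ × ℤ) (e : Bool × Bool) : ℝ × ℝ :=
  ((v.1 : ℝ) + (if e.1 then 1 / 2 else -(1 / 2)),
   (v.2 : ℝ) + (if e.2 then 1 / 2 else -(1 / 2)))

/-- The metric weight `m(γ,v) = (1/4) Σ_{u ∈ N_v} wind(γ,u)`. -/
def mweight (n : ℕ) (g : ℕ → ℤ × ℤ) (v : ℤ × ℤ) : ℝ :=
  (1 / 4) * ∑ e : Bool × Bool, (wind n g (dpt v e) : ℝ)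

/-- The topological weight `top(γ,v)`: the average of the minimum and maximum of
`{wind(γ,u) : u ∈ N_v}`. -/
def tweight (n : ℕ) (g : ℕ → ℤ × ℤ) (v : ℤ × ℤ) : ℝ :=
  (((Finset.univ.inf' Finset.univ_nonempty fun e : Bool × Bool => wind n g (dpt v e)) +
      (Finset.univ.sup' Finset.univ_nonempty fun e : Bool × Bool => wind n g (dpt v e)) :
      ℤ) : ℝ) / 2

/-- The previous index of `k` among `0, …, n-1`, cyclically. -/
def prevIdx (n k : ℕ) : ℕ := if k = 0 then n - 1 else k - 1

/-- Four times the angle `∠(γ, g k)` of the cycle at its `k`-th vertex: the cross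
product of the incoming and outgoing edge vectors (`1` for a left turn, `-1` for a
right turn, `0` if the cycle goes straight). -/
def turnNum (n : ℕ) (g : ℕ → ℤ × ℤ) (k : ℕ) : ℤ :=
  let d1 := g k - g (prevIdx n k)
  let d2 := g (k + 1) - g k
  d1.1 * d2.2 - d1.2 * d2.1

/-- The angle `∠(γ,v)` of the cycle at `v` (`0` if `v` is not a vertex of the cycle). -/
def angleAt (n : ℕ) (g : ℕ → ℤ × ℤ) (v : ℤ × ℤ) : ℝ :=
  (1 / 4) * ∑ k ∈ Finset.range n, if g k = v then (turnNum n g k : ℝ) else 0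

/-- The color `col(v) = (−1)^{x+y+1}` of `v = (x,y) ∈ ℤ²`. -/
def col (v : ℤ × ℤ) : ℝ := (-1 : ℝ) ^ (v.1 + v.2 + 1)

/-!
Two unit squares sharing a lattice edge have winding numbers differing by the net number of
traversals of that edge. For a vertical edge this is exactly the crossing counted by the
horizontal ray; for a horizontal edge it holds after adding a correction that telescopes along
the closed cycle. Around a vertex off the simple cycle `γ` the four windings therefore agree, so
`top = m` there. At the vertex `γ k` only the incoming step `u` and the outgoing step `w` carry
flow, so the four windings are pinned down by `u` and `w`, and a check of the sixteen pairs
gives `2 (min + max) - sum = u × w`, which is four times the angle.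
-/

lemma IsUnitStep.cases {A B : ℤ × ℤ} (h : IsUnitStep (B - A)) :
    (B.1 = A.1 + 1 ∧ B.2 = A.2) ∨ (B.1 = A.1 - 1 ∧ B.2 = A.2) ∨
      (B.1 = A.1 ∧ B.2 = A.2 + 1) ∨ (B.1 = A.1 ∧ B.2 = A.2 - 1) := by
  rcases h with h | h | h | h <;> rw [Prod.ext_iff] at h <;>
    simp only [Prod.fst_sub, Prod.snd_sub] at h <;> omega

lemma int_add_half_lt_int_iff (m k : ℤ) : (m : ℝ) + 1 / 2 < k ↔ m < k := by
  constructor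
  · intro h
    exact_mod_cast (by linarith : (m : ℝ) < k)
  · intro h
    have : (m : ℝ) + 1 ≤ k := by exact_mod_cast h
    linarith

lemma int_le_int_add_half_iff (m k : ℤ) : (m : ℝ) ≤ k + 1 / 2 ↔ m ≤ k := by
  rw [← not_lt, ← not_lt, int_add_half_lt_int_iff]

def halfPt (xl yl : ℤ) : ℝ × ℝ := ((xl : ℝ) + 1 / 2, (yl : ℝ) + 1 / 2)

lemma dpt_eq_halfPt (v : ℤ × ℤ) (e : Bool × Bool) :
    dpt v e = halfPt (v.1 - if e.1 then 0 else 1) (v.2 - if e.2 then 0 else 1) := by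
  obtain ⟨b₁, b₂⟩ := e
  cases b₁ <;> cases b₂ <;> simp only [dpt, halfPt, Prod.mk.injEq] <;> push_cast <;>
    constructor <;> ring

def crossing (A B : ℤ × ℤ) (xl yl : ℤ) : ℤ :=
  if A.1 = B.1 ∧ xl < A.1 ∧ min A.2 B.2 = yl then B.2 - A.2 else 0

lemma windTerm_halfPt {A B : ℤ × ℤ} (h : IsUnitStep (B - A)) (xl yl : ℤ) :
    windTerm A B (halfPt xl yl) = crossing A B xl yl := by
  refine if_congr ?_ rfl rfl
  simp only [halfPt, int_add_half_lt_int_iff, int_le_int_add_half_iff]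
  rcases h.cases with ⟨h₁, h₂⟩ | ⟨h₁, h₂⟩ | ⟨h₁, h₂⟩ | ⟨h₁, h₂⟩ <;> omega

lemma crossing_sub_crossing_succ_fst {A B : ℤ × ℤ} (h : IsUnitStep (B - A)) (xl yl : ℤ) :
    crossing A B xl yl - crossing A B (xl + 1) yl =
      (if A = (xl + 1, yl) ∧ B = (xl + 1, yl + 1) then 1 else 0) -
        if A = (xl + 1, yl + 1) ∧ B = (xl + 1, yl) then 1 else 0 := by
  obtain ⟨a₁, a₂⟩ := A
  obtain ⟨b₁, b₂⟩ := B
  rcases h.cases with ⟨h₁, h₂⟩ | ⟨h₁, h₂⟩ | ⟨h₁, h₂⟩ | ⟨h₁, h₂⟩ <;>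
    simp only [crossing, Prod.mk.injEq] at * <;> split_ifs <;> omega

/-- The correction term is a difference of a function of the two endpoints, so it telescopes
along a closed path. -/
lemma crossing_succ_snd_sub_crossing {A B : ℤ × ℤ} (h : IsUnitStep (B - A)) (xl yl : ℤ) :
    crossing A B xl (yl + 1) - crossing A B xl yl +
        ((if B.2 = yl + 1 ∧ xl < B.1 then 1 else 0) - if A.2 = yl + 1 ∧ xl < A.1 then 1 else 0) =
      (if A = (xl, yl + 1) ∧ B = (xl + 1, yl + 1) then 1 else 0) -
        if A = (xl + 1, yl + 1) ∧ B = (xl, yl + 1) then 1 else 0 := by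
  obtain ⟨a₁, a₂⟩ := A
  obtain ⟨b₁, b₂⟩ := B
  rcases h.cases with ⟨h₁, h₂⟩ | ⟨h₁, h₂⟩ | ⟨h₁, h₂⟩ | ⟨h₁, h₂⟩ <;>
    simp only [crossing, Prod.mk.injEq] at * <;> split_ifs <;> omega

section LatticeCycle

variable {n : ℕ} {g : ℕ → ℤ × ℤ}

def halfWind (n : ℕ) (g : ℕ → ℤ × ℤ) (xl yl : ℤ) : ℤ :=
  ∑ k ∈ Finset.range n, crossing (g k) (g (k + 1)) xl yl

def edgeCount (n : ℕ) (g : ℕ → ℤ × ℤ) (A B : ℤ × ℤ) : ℤ :=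
  ∑ k ∈ Finset.range n, if g k = A ∧ g (k + 1) = B then 1 else 0

def netFlow (n : ℕ) (g : ℕ → ℤ × ℤ) (A B : ℤ × ℤ) : ℤ :=
  edgeCount n g A B - edgeCount n g B A

lemma wind_halfPt (hstep : ∀ k < n, IsUnitStep (g (k + 1) - g k)) (xl yl : ℤ) :
    wind n g (halfPt xl yl) = halfWind n g xl yl :=
  Finset.sum_congr rfl fun k hk => windTerm_halfPt (hstep k (Finset.mem_range.mp hk)) xl yl

lemma halfWind_sub_halfWind_succ_fst (hstep : ∀ k < n, IsUnitStep (g (k + 1) - g k))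
    (xl yl : ℤ) :
    halfWind n g xl yl - halfWind n g (xl + 1) yl = netFlow n g (xl + 1, yl) (xl + 1, yl + 1) := by
  simp only [halfWind, netFlow, edgeCount, ← Finset.sum_sub_distrib]
  exact Finset.sum_congr rfl fun k hk =>
    crossing_sub_crossing_succ_fst (hstep k (Finset.mem_range.mp hk)) xl yl

lemma halfWind_succ_snd_sub_halfWind (hclosed : g n = g 0)
    (hstep : ∀ k < n, IsUnitStep (g (k + 1) - g k)) (xl yl : ℤ) :
    halfWind n g xl (yl + 1) - halfWind n g xl yl = netFlow n g (xl, yl + 1) (xl + 1, yl + 1) := by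
  let r : ℤ × ℤ → ℤ := fun P => if P.2 = yl + 1 ∧ xl < P.1 then 1 else 0
  have htele : ∑ k ∈ Finset.range n, (r (g (k + 1)) - r (g k)) = 0 := by
    simpa only [hclosed, sub_self] using Finset.sum_range_sub (fun k => r (g k)) n
  rw [← add_zero (_ - _), ← htele]
  simp only [halfWind, netFlow, edgeCount, ← Finset.sum_sub_distrib, ← Finset.sum_add_distrib]
  exact Finset.sum_congr rfl fun k hk =>
    crossing_succ_snd_sub_crossing (hstep k (Finset.mem_range.mp hk)) xl yl

lemma wind_dpt (hstep : ∀ k < n, IsUnitStep (g (k + 1) - g k)) (v : ℤ × ℤ) (e : Bool × Bool) :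
    wind n g (dpt v e) = halfWind n g (v.1 - if e.1 then 0 else 1) (v.2 - if e.2 then 0 else 1) := by
  rw [dpt_eq_halfPt, wind_halfPt hstep]

lemma wind_dpt_sub_eq_netFlow_right (hclosed : g n = g 0)
    (hstep : ∀ k < n, IsUnitStep (g (k + 1) - g k)) (v : ℤ × ℤ) :
    wind n g (dpt v (true, true)) - wind n g (dpt v (true, false)) = netFlow n g v (v + (1, 0)) := by
  obtain ⟨x, y⟩ := v
  simpa [wind_dpt hstep] using halfWind_succ_snd_sub_halfWind hclosed hstep x (y - 1)

lemma wind_dpt_sub_eq_netFlow_up (hstep : ∀ k < n, IsUnitStep (g (k + 1) - g k)) (v : ℤ × ℤ) :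
    wind n g (dpt v (false, true)) - wind n g (dpt v (true, true)) = netFlow n g v (v + (0, 1)) := by
  obtain ⟨x, y⟩ := v
  simpa [wind_dpt hstep] using halfWind_sub_halfWind_succ_fst hstep (x - 1) y

lemma wind_dpt_sub_eq_netFlow_down (hstep : ∀ k < n, IsUnitStep (g (k + 1) - g k)) (v : ℤ × ℤ) :
    wind n g (dpt v (true, false)) - wind n g (dpt v (false, false)) =
      netFlow n g v (v + (0, -1)) := by
  obtain ⟨x, y⟩ := v
  have h := halfWind_sub_halfWind_succ_fst hstep (x - 1) (y - 1)
  simp only [sub_add_cancel] at h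
  simp only [netFlow, wind_dpt hstep, ↓reduceIte, sub_zero, Bool.false_eq_true, Int.reduceNeg,
    Prod.mk_add_mk, add_zero, ← sub_eq_add_neg] at h ⊢
  omega

lemma netFlow_eq_zero_of_forall_ne (hn : 0 < n) (hclosed : g n = g 0) {v : ℤ × ℤ}
    (hv : ∀ k < n, g k ≠ v) (B : ℤ × ℤ) : netFlow n g v B = 0 := by
  have hout : edgeCount n g v B = 0 :=
    Finset.sum_eq_zero fun k hk => if_neg fun h => hv k (Finset.mem_range.mp hk) h.1
  have hin : edgeCount n g B v = 0 := by
    refine Finset.sum_eq_zero fun k hk => if_neg fun h => ?_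
    rcases Nat.lt_or_eq_of_le (Finset.mem_range.mp hk) with hk' | hk'
    · exact hv (k + 1) hk' h.2
    · exact hv 0 hn (by rw [← hclosed, ← hk', h.2])
  rw [netFlow, hout, hin, sub_self]

lemma prevIdx_lt {k : ℕ} (hk : k < n) : prevIdx n k < n := by
  unfold prevIdx
  split <;> omega

lemma apply_prevIdx_succ (hclosed : g n = g 0) {k : ℕ} (hk : k < n) : g (prevIdx n k + 1) = g k := by
  unfold prevIdx
  split
  · subst k
    rw [Nat.sub_add_cancel hk, hclosed]
  · rw [Nat.sub_add_cancel (Nat.pos_of_ne_zero ‹_›)]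

lemma eq_prevIdx_of_apply_succ_eq (hclosed : g n = g 0) (hsimple : Set.InjOn g ↑(Finset.range n))
    {j k : ℕ} (hj : j < n) (hk : k < n) (h : g (j + 1) = g k) : j = prevIdx n k := by
  have mem : ∀ {i}, i < n → i ∈ (↑(Finset.range n) : Set ℕ) := by simp
  unfold prevIdx
  rcases Nat.lt_or_eq_of_le hj with hj' | hj'
  · have := hsimple (mem hj') (mem hk) h
    split <;> omega
  · have h0 : g 0 = g k := by rwa [← hclosed, ← hj']
    have := hsimple (mem (Nat.zero_lt_of_lt hj)) (mem hk) h0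
    split <;> omega

lemma netFlow_apply_add (hclosed : g n = g 0) (hsimple : Set.InjOn g ↑(Finset.range n))
    {k : ℕ} (hk : k < n) (δ : ℤ × ℤ) :
    netFlow n g (g k) (g k + δ) =
      (if g (k + 1) - g k = δ then 1 else 0) - if g k - g (prevIdx n k) = -δ then 1 else 0 := by
  have hout : edgeCount n g (g k) (g k + δ) = if g (k + 1) - g k = δ then 1 else 0 := by
    rw [edgeCount, Finset.sum_eq_single_of_mem k (Finset.mem_range.mpr hk)]
    · simp [sub_eq_iff_eq_add']
    · intro j hj hjk
      exact if_neg fun h => hjk (hsimple (by simpa using hj) (by simpa using hk) h.1)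
  have hin : edgeCount n g (g k + δ) (g k) = if g k - g (prevIdx n k) = -δ then 1 else 0 := by
    rw [edgeCount, Finset.sum_eq_single_of_mem _ (Finset.mem_range.mpr (prevIdx_lt hk)),
      apply_prevIdx_succ hclosed hk]
    · refine if_congr ⟨fun h => ?_, fun h => ⟨?_, rfl⟩⟩ rfl rfl
      · rw [h.1]; abel
      · rw [← neg_neg δ, ← h]; abel
    · intro j hj hjk
      exact if_neg fun h => hjk (eq_prevIdx_of_apply_succ_eq hclosed hsimple
        (Finset.mem_range.mp hj) hk h.2)
  rw [netFlow, hout, hin]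

lemma angleAt_apply (hsimple : Set.InjOn g ↑(Finset.range n)) {k : ℕ} (hk : k < n) :
    angleAt n g (g k) = 1 / 4 * (turnNum n g k : ℝ) := by
  rw [angleAt, Finset.sum_eq_single_of_mem k (Finset.mem_range.mpr hk), if_pos rfl]
  intro j hj hjk
  exact if_neg fun h => hjk (hsimple (by simpa using hj) (by simpa using hk) h)

lemma angleAt_eq_zero_of_forall_ne {v : ℤ × ℤ} (hv : ∀ k < n, g k ≠ v) : angleAt n g v = 0 := by
  rw [angleAt, Finset.sum_eq_zero fun k hk => if_neg (hv k (Finset.mem_range.mp hk)), mul_zero]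

end LatticeCycle

lemma Finset.inf'_univ_bool_prod {α : Type*} [LinearOrder α] (f : Bool × Bool → α) :
    Finset.univ.inf' Finset.univ_nonempty f =
      min (min (f (false, false)) (f (false, true))) (min (f (true, false)) (f (true, true))) := by
  refine le_antisymm (le_min (le_min ?_ ?_) (le_min ?_ ?_)) (Finset.le_inf' _ _ fun e _ => ?_) <;>
    first
    | exact Finset.inf'_le f (Finset.mem_univ _)
    | rcases e with ⟨_ | _, _ | _⟩ <;> simp

lemma Finset.sup'_univ_bool_prod {α : Type*} [LinearOrder α] (f : Bool × Bool → α) :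
    Finset.univ.sup' Finset.univ_nonempty f =
      max (max (f (false, false)) (f (false, true))) (max (f (true, false)) (f (true, true))) := by
  refine le_antisymm (Finset.sup'_le _ _ fun e _ => ?_) (max_le (max_le ?_ ?_) (max_le ?_ ?_)) <;>
    first
    | exact Finset.le_sup' f (Finset.mem_univ _)
    | rcases e with ⟨_ | _, _ | _⟩ <;> simp

lemma tweight_sub_mweight_eq {n : ℕ} {g : ℕ → ℤ × ℤ} {v : ℤ × ℤ} {a b c d : ℤ}
    (ha : wind n g (dpt v (false, false)) = a) (hb : wind n g (dpt v (true, false)) = b)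
    (hc : wind n g (dpt v (false, true)) = c) (hd : wind n g (dpt v (true, true)) = d) :
    tweight n g v - mweight n g v =
      ((2 * (min (min a c) (min b d) + max (max a c) (max b d)) - (a + c + b + d) : ℤ) : ℝ) / 4 := by
  rw [tweight, mweight, Finset.inf'_univ_bool_prod, Finset.sup'_univ_bool_prod,
    Fintype.sum_prod_type, Fintype.sum_bool, Fintype.sum_bool, Fintype.sum_bool, ha, hb, hc, hd]
  push_cast
  ring

/-- `a, b, c, d` are the windings of the lower-left, lower-right, upper-left and upper-right
squares at a vertex which the cycle enters by the step `u` and leaves by the step `w`. -/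
lemma two_mul_min_add_max_sub_sum {a b c d : ℤ} {u w : ℤ × ℤ} (hu : IsUnitStep u)
    (hw : IsUnitStep w)
    (hdb : d - b = (if w = (1, 0) then 1 else 0) - if u = -(1, 0) then 1 else 0)
    (hcd : c - d = (if w = (0, 1) then 1 else 0) - if u = -(0, 1) then 1 else 0)
    (hba : b - a = (if w = (0, -1) then 1 else 0) - if u = -(0, -1) then 1 else 0) :
    2 * (min (min a c) (min b d) + max (max a c) (max b d)) - (a + c + b + d) =
      u.1 * w.2 - u.2 * w.1 := by
  rcases hu with rfl | rfl | rfl | rfl <;> rcases hw with rfl | rfl | rfl | rfl <;>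
    simp only [Prod.mk.injEq, Prod.neg_mk, neg_zero, Int.reduceNeg, reduceCtorEq, and_true,
      and_false, and_self, zero_ne_one, one_ne_zero, neg_eq_zero, zero_eq_neg, ↓reduceIte]
      at hdb hcd hba ⊢ <;> omega

/-- Let `γ` be a simple closed oriented lattice cycle in `ℤ²` (e.g. a cycle
of the system of cycles corresponding to a tiling of a duplex region) and `v ∈ ℤ²`.
Then the topological weight minus the metric weight equals the angle `∠(γ,v)` if `v`
lies on `γ`, and equals `0` otherwise (here `angleAt` is `0` at points not on `γ`). -/
theorem tweight_sub_mweight_eq_angle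
    (n : ℕ) (g : ℕ → ℤ × ℤ) (hn : 0 < n)
    (hclosed : g n = g 0)
    (hstep : ∀ k < n, IsUnitStep (g (k + 1) - g k))
    (hsimple : Set.InjOn g ↑(Finset.range n))
    (v : ℤ × ℤ) :
    tweight n g v - mweight n g v = angleAt n g v := by
  have hR := wind_dpt_sub_eq_netFlow_right hclosed hstep v
  have hU := wind_dpt_sub_eq_netFlow_up hstep v
  have hD := wind_dpt_sub_eq_netFlow_down hstep v
  rw [tweight_sub_mweight_eq rfl rfl rfl rfl]
  by_cases hv : ∃ k < n, g k = v
  · obtain ⟨k, hk, rfl⟩ := hv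
    rw [netFlow_apply_add hclosed hsimple hk] at hR hU hD
    have hin : IsUnitStep (g k - g (prevIdx n k)) :=
      apply_prevIdx_succ hclosed hk ▸ hstep _ (prevIdx_lt hk)
    rw [two_mul_min_add_max_sub_sum hin (hstep k hk) hR hU hD, angleAt_apply hsimple hk, turnNum]
    push_cast
    ring
  · push Not at hv
    simp only [netFlow_eq_zero_of_forall_ne hn hclosed hv] at hR hU hD
    rw [angleAt_eq_zero_of_forall_ne hv, div_eq_zero_iff, Int.cast_eq_zero]
    omega

end
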